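/- Let p, q, k be positive integers with p > 2, q > kp + 2, e = p(q−k), and 0 ≤ a ≤ k−1. Then ρ(ᵉK_{p,q−a})² is the largest root of f(x) = x³ − e x² + (k−a)p(p−1)(q−a−(k−a)p)x. -/
import Mathlib


open Matrix

noncomputable def specRad {n : Type*} [Fintype n] [DecidableEq n] (M : Matrix n n ℝ) : ℝ :=
  sSup (spectrum ℝ M)


/-- Ferrers (chain) bipartite adjacency matrix for degree sequence `d` with `q'` columns. -/
noncomputable def adjD (p q' : ℕ) (d : Fin p → ℕ) :
    Matrix (Fin p ⊕ Fin q') (Fin p ⊕ Fin q') ℝ :=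
  Matrix.fromBlocks 0 (Matrix.of fun i j => if (j : ℕ) < d i then 1 else 0)
    (Matrix.of fun (i : Fin p) (j : Fin q') => if (j : ℕ) < d i then (1:ℝ) else 0)ᵀ 0

/-- Degree sequence of `K^±_{p,q-k}`: `(q-k+1, (q-k)^{p-2}, q-k-1)`. -/
def dStar (p q k : ℕ) : Fin p → ℕ :=
  fun i => if (i : ℕ) = 0 then q - k + 1 else if (i : ℕ) = p - 1 then q - k - 1 else q - k

/-- Degree sequence of `ᵉK_{p,q-a}`: `((q-a)^{p-1}, q-a-(k-a)p)`. -/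
def dKa (p q k a : ℕ) : Fin p → ℕ :=
  fun i => if (i : ℕ) < p - 1 then q - a else q - a - (k - a) * p

set_option maxHeartbeats 1000000

lemma mem_spec_iff {n : Type*} [Fintype n] [DecidableEq n] (M : Matrix n n ℝ) (c : ℝ) :
    c ∈ spectrum ℝ M ↔ ∃ v, v ≠ 0 ∧ M.mulVec v = c • v := by
  rw [spectrum.mem_iff, Matrix.isUnit_iff_isUnit_det, isUnit_iff_ne_zero, not_not,
      ← Matrix.exists_mulVec_eq_zero_iff]
  have key : ∀ v, (algebraMap ℝ (Matrix n n ℝ) c - M).mulVec v = c • v - M.mulVec v := by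
    intro v
    rw [Matrix.sub_mulVec, Algebra.algebraMap_eq_smul_one, Matrix.smul_mulVec,
      Matrix.one_mulVec]
  constructor
  · rintro ⟨v, hv, h⟩
    rw [key] at h
    exact ⟨v, hv, (sub_eq_zero.mp h).symm⟩
  · rintro ⟨v, hv, h⟩
    exact ⟨v, hv, by rw [key, h, sub_self]⟩

lemma sum_ite_lt (N c : ℕ) (hc : c ≤ N) (r : ℝ) :
    ∑ j : Fin N, (if (j : ℕ) < c then r else 0) = c * r := by
  rw [Fin.sum_univ_eq_sum_range (fun j => if j < c then r else 0)]
  rw [← Finset.sum_subset (Finset.range_subset_range.2 hc)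
      (fun j _ hj => by simp at hj ⊢; omega)]
  rw [Finset.sum_congr rfl (fun j hj => if_pos (Finset.mem_range.mp hj))]
  simp [mul_comm]

lemma sum_ite_lt' (N c : ℕ) (hc : c ≤ N) (r s : ℝ) :
    ∑ j : Fin N, (if (j : ℕ) < c then r else s) = c * r + ((N : ℝ) - c) * s := by
  have h1 : ∀ j : Fin N, (if (j : ℕ) < c then r else s)
      = (if (j : ℕ) < c then r - s else 0) + s := by intro j; split <;> ring
  simp_rw [h1]
  rw [Finset.sum_add_distrib, sum_ite_lt N c hc]
  simp [Finset.card_univ]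
  ring

lemma adjD_mulVec_inl (p q' : ℕ) (d : Fin p → ℕ) (v : Fin p ⊕ Fin q' → ℝ) (i : Fin p) :
    (adjD p q' d).mulVec v (Sum.inl i)
      = ∑ j : Fin q', (if (j : ℕ) < d i then (1:ℝ) else 0) * v (Sum.inr j) := by
  simp [adjD, Matrix.mulVec, dotProduct, Fintype.sum_sum_type, ite_mul]

lemma adjD_mulVec_inr (p q' : ℕ) (d : Fin p → ℕ) (v : Fin p ⊕ Fin q' → ℝ) (j : Fin q') :
    (adjD p q' d).mulVec v (Sum.inr j)
      = ∑ i : Fin p, (if (j : ℕ) < d i then (1:ℝ) else 0) * v (Sum.inl i) := by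
  simp [adjD, Matrix.mulVec, dotProduct, Fintype.sum_sum_type, ite_mul]

theorem stmt9 (p q k e a : ℕ) (hp : 2 < p) (hk : 0 < k) (hq : k * p + 2 < q)
    (he : e = p * (q - k)) (ha : a < k) :
    IsGreatest
      {x : ℝ | x^3 - (e:ℝ)*x^2
        + ((k:ℝ)-(a:ℝ))*(p:ℝ)*((p:ℝ)-1)*((q:ℝ)-(a:ℝ)-((k:ℝ)-(a:ℝ))*(p:ℝ))*x = 0}
      ((specRad (adjD p (q - a) (dKa p q k a))) ^ 2) := by
  -- natural number facts
  have hkp : k ≤ k * p := Nat.le_mul_of_pos_right k (by omega)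
  have hkq : k ≤ q := by omega
  have haq : a ≤ q := by omega
  have h1 : a ≤ a * p := Nat.le_mul_of_pos_right a (by omega)
  have h2 : (k - a) * p + a * p = k * p := by
    rw [← Nat.add_mul, Nat.sub_add_cancel (le_of_lt ha)]
  have hsub3 : (k - a) * p + a + 3 ≤ q := by omega
  have hnnle : q - a - (k - a) * p ≤ q - a := Nat.sub_le _ _
  have hkap1 : 1 ≤ (k - a) * p := Nat.mul_pos (by omega) (by omega)
  have hnnlt : q - a - (k - a) * p < q - a := by omega
  have hnn1 : 1 ≤ q - a - (k - a) * p := by omega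
  have hple : p - 1 < p := by omega
  -- real variables
  obtain ⟨P, hP⟩ : ∃ x : ℝ, x = (p : ℝ) := ⟨_, rfl⟩
  obtain ⟨Q, hQ⟩ : ∃ x : ℝ, x = (q : ℝ) := ⟨_, rfl⟩
  obtain ⟨K, hK⟩ : ∃ x : ℝ, x = (k : ℝ) := ⟨_, rfl⟩
  obtain ⟨Aa, hAa⟩ : ∃ x : ℝ, x = (a : ℝ) := ⟨_, rfl⟩
  obtain ⟨m, hm_def⟩ : ∃ x : ℝ, x = Q - Aa := ⟨_, rfl⟩
  obtain ⟨n, hn_def⟩ : ∃ x : ℝ, x = Q - Aa - (K - Aa) * P := ⟨_, rfl⟩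
  have hm : ((q - a : ℕ) : ℝ) = m := by rw [Nat.cast_sub haq, hm_def, hQ, hAa]
  have hn : ((q - a - (k - a) * p : ℕ) : ℝ) = n := by
    rw [Nat.cast_sub (by omega : (k-a)*p ≤ q - a), Nat.cast_sub haq, Nat.cast_mul,
      Nat.cast_sub (le_of_lt ha), hn_def, hQ, hAa, hK, hP]
  have hsp : ((p - 1 : ℕ) : ℝ) = P - 1 := by
    rw [Nat.cast_sub (by omega : 1 ≤ p), hP, Nat.cast_one]
  have he2 : (e : ℝ) = P * (Q - K) := by
    rw [he, Nat.cast_mul, Nat.cast_sub hkq, hP, hQ, hK]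
  have hP3 : (3:ℝ) ≤ P := by rw [hP]; exact_mod_cast hp
  have hn1 : (1:ℝ) ≤ n := by rw [← hn]; exact_mod_cast hnn1
  have hm1 : (1:ℝ) ≤ m := by rw [← hm]; exact_mod_cast (by omega : 1 ≤ q - a)
  -- spectral quantities
  obtain ⟨D, hD⟩ : ∃ x : ℝ, x = ((P-1)*m + n)^2 - 4*((P-1)*n*(m-n)) := ⟨_, rfl⟩
  have hD0 : 0 ≤ D := by
    have h3 : D = ((P-1)*m - n)^2 + 4*(P-1)*n^2 := by rw [hD]; ring
    nlinarith [sq_nonneg ((P-1)*m - n), sq_nonneg n]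
  have hsD : Real.sqrt D ^ 2 = D := Real.sq_sqrt hD0
  have hsD0 : (0:ℝ) ≤ Real.sqrt D := Real.sqrt_nonneg D
  obtain ⟨μ, hμ⟩ : ∃ x : ℝ, x = (((P-1)*m + n) + Real.sqrt D)/2 := ⟨_, rfl⟩
  have hμquad : μ^2 = ((P-1)*m + n)*μ - (P-1)*n*(m-n) := by
    rw [hμ]; linear_combination hsD/4 + hD/4
  have hμpos : 0 < μ := by
    rw [hμ]; nlinarith [hP3, hm1, hn1, hsD0]
  obtain ⟨l, hl⟩ : ∃ x : ℝ, x = Real.sqrt μ := ⟨_, rfl⟩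
  have hl2 : l^2 = μ := by rw [hl]; exact Real.sq_sqrt hμpos.le
  have hl0 : 0 < l := by rw [hl]; exact Real.sqrt_pos.2 hμpos
  -- membership of l in the spectrum
  have hone : ∀ j : Fin (q - a), (if (j:ℕ) < q - a then (1:ℝ) else 0) = 1 :=
    fun j => if_pos j.isLt
  have hmem : l ∈ spectrum ℝ (adjD p (q - a) (dKa p q k a)) := by
    rw [mem_spec_iff]
    set v : Fin p ⊕ Fin (q - a) → ℝ :=
      Sum.elim (fun i : Fin p => if (i:ℕ) < p - 1 then n*μ else n*(μ - (m-n)*(P-1)))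
        (fun j : Fin (q - a) => if (j:ℕ) < q - a - (k - a) * p then l*(μ-(m-n)*(P-1))
          else (P-1)*n*l) with hv
    have hvinr : ∀ j : Fin (q - a), v (Sum.inr j)
        = if (j:ℕ) < q - a - (k - a) * p then l*(μ-(m-n)*(P-1)) else (P-1)*n*l :=
      fun j => rfl
    have hvinl : ∀ i : Fin p, v (Sum.inl i)
        = if (i:ℕ) < p - 1 then n*μ else n*(μ - (m-n)*(P-1)) := fun i => rfl
    refine ⟨v, ?_, ?_⟩
    · intro h0
      have h5 := congrFun h0 (Sum.inr ⟨q - a - (k - a) * p, hnnlt⟩)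
      rw [hvinr ⟨q - a - (k - a) * p, hnnlt⟩] at h5
      simp at h5
      rcases h5 with (h | h) | h <;> linarith
    · funext z
      cases z with
      | inl i =>
        rw [adjD_mulVec_inl]
        simp only [hvinr]
        by_cases hi : (i:ℕ) < p - 1
        · have hd : dKa p q k a i = q - a := by simp [dKa, hi]
          rw [hd]
          simp only [hone, one_mul]
          rw [sum_ite_lt' (q-a) (q - a - (k-a)*p) hnnle, hn, hm]
          simp only [Pi.smul_apply, smul_eq_mul, hvinl]
          rw [if_pos hi]
          ring
        · have hd : dKa p q k a i = q - a - (k - a) * p := by simp [dKa, hi]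
          rw [hd]
          have hterm : ∀ j : Fin (q - a),
              (if (j:ℕ) < q - a - (k-a)*p then (1:ℝ) else 0) *
                (if (j:ℕ) < q - a - (k-a)*p then l*(μ-(m-n)*(P-1)) else (P-1)*n*l)
              = if (j:ℕ) < q - a - (k-a)*p then l*(μ-(m-n)*(P-1)) else 0 := by
            intro j
            by_cases hj : (j:ℕ) < q - a - (k-a)*p
            · rw [if_pos hj, if_pos hj, if_pos hj, one_mul]
            · rw [if_neg hj, if_neg hj, if_neg hj, zero_mul]
          simp only [hterm]
          rw [sum_ite_lt (q-a) (q - a - (k-a)*p) hnnle, hn]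
          simp only [Pi.smul_apply, smul_eq_mul, hvinl]
          rw [if_neg hi]
          ring
      | inr j =>
        rw [adjD_mulVec_inr]
        simp only [hvinl]
        have hterm : ∀ i : Fin p,
            (if (j:ℕ) < dKa p q k a i then (1:ℝ) else 0) *
              (if (i:ℕ) < p - 1 then n*μ else n*(μ-(m-n)*(P-1)))
            = if (i:ℕ) < p - 1 then n*μ
              else (if (j:ℕ) < q - a - (k-a)*p then n*(μ-(m-n)*(P-1)) else 0) := by
          intro i
          by_cases hi : (i:ℕ) < p - 1
          · have hd : dKa p q k a i = q - a := by simp [dKa, hi]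
            rw [hd, if_pos j.isLt, one_mul, if_pos hi, if_pos hi]
          · have hd : dKa p q k a i = q - a - (k-a)*p := by simp [dKa, hi]
            rw [hd, if_neg hi, if_neg hi]
            by_cases hj : (j:ℕ) < q - a - (k-a)*p
            · rw [if_pos hj, if_pos hj, one_mul]
            · rw [if_neg hj, if_neg hj, zero_mul]
        simp only [hterm]
        rw [sum_ite_lt' p (p-1) (by omega), hsp, ← hP]
        simp only [Pi.smul_apply, smul_eq_mul, hvinr]
        by_cases hj : (j:ℕ) < q - a - (k-a)*p
        · rw [if_pos hj, if_pos hj]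
          linear_combination (-(μ-(m-n)*(P-1)))*hl2 - hμquad
        · rw [if_neg hj, if_neg hj]
          linear_combination (-(P-1)*n)*hl2
  -- upper bound
  have hub : ∀ c ∈ spectrum ℝ (adjD p (q - a) (dKa p q k a)), c ≤ l := by
    intro c hc
    obtain ⟨w, hvne, hveq⟩ := (mem_spec_iff _ c).mp hc
    set t := w (Sum.inl ⟨p-1, hple⟩) with htdef
    set S1 := ∑ i : Fin p, (if (i:ℕ) < p-1 then w (Sum.inl i) else 0) with hS1def
    have hcol : ∀ j : Fin (q - a), c * w (Sum.inr j)
        = S1 + (if (j:ℕ) < q - a - (k-a)*p then t else 0) := by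
      intro j
      have h := congrFun hveq (Sum.inr j)
      rw [adjD_mulVec_inr] at h
      have hterm : ∀ i : Fin p, (if (j:ℕ) < dKa p q k a i then (1:ℝ) else 0) * w (Sum.inl i)
          = (if (i:ℕ) < p-1 then w (Sum.inl i) else 0)
            + (if i = (⟨p-1, hple⟩ : Fin p) then
                (if (j:ℕ) < q - a - (k-a)*p then t else 0) else 0) := by
        intro i
        by_cases hi : (i:ℕ) < p-1
        · have hne : i ≠ (⟨p-1, hple⟩ : Fin p) := by
            intro hE2; rw [hE2] at hi; simp at hi
          have hd : dKa p q k a i = q - a := by simp [dKa, hi]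
          rw [hd, if_pos j.isLt, one_mul, if_pos hi, if_neg hne, add_zero]
        · have hie : i = (⟨p-1, hple⟩ : Fin p) := by
            have h9 := i.isLt; ext; simp; omega
          have hd : dKa p q k a i = q - a - (k-a)*p := by simp [dKa, hi]
          rw [hd, if_neg hi, if_pos hie, zero_add, hie, ← htdef]
          by_cases hj : (j:ℕ) < q - a - (k-a)*p
          · rw [if_pos hj, if_pos hj, one_mul]
          · rw [if_neg hj, if_neg hj, zero_mul]
      simp only [hterm] at h
      rw [Finset.sum_add_distrib, Finset.sum_ite_eq' Finset.univ (⟨p-1, hple⟩ : Fin p)] at h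
      simp only [Finset.mem_univ, if_true, Pi.smul_apply, smul_eq_mul] at h
      rw [← h, ← hS1def]
    have hxi : ∀ i : Fin p, (i:ℕ) < p-1 →
        c^2 * w (Sum.inl i) = m * S1 + n * t := by
      intro i hi
      have h := congrFun hveq (Sum.inl i)
      rw [adjD_mulVec_inl] at h
      have hd : dKa p q k a i = q - a := by simp [dKa, hi]
      rw [hd] at h
      simp only [hone, one_mul, Pi.smul_apply, smul_eq_mul] at h
      calc c^2 * w (Sum.inl i) = c * (c * w (Sum.inl i)) := by ring
        _ = c * ∑ j : Fin (q-a), w (Sum.inr j) := by rw [h]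
        _ = ∑ j : Fin (q-a), c * w (Sum.inr j) := Finset.mul_sum _ _ _
        _ = ∑ j : Fin (q-a), (S1 + if (j:ℕ) < q - a - (k-a)*p then t else 0) := by
            exact Finset.sum_congr rfl fun j _ => hcol j
        _ = m * S1 + n * t := by
            rw [Finset.sum_add_distrib, sum_ite_lt (q-a) _ hnnle, Finset.sum_const,
              Finset.card_univ, Fintype.card_fin, nsmul_eq_mul, hn, hm]
    have hBt : c^2 * t = n * (S1 + t) := by
      have h := congrFun hveq (Sum.inl (⟨p-1, hple⟩ : Fin p))
      rw [adjD_mulVec_inl] at h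
      have hd : dKa p q k a (⟨p-1, hple⟩ : Fin p) = q - a - (k-a)*p := by simp [dKa]
      rw [hd] at h
      simp only [Pi.smul_apply, smul_eq_mul] at h
      rw [← htdef] at h
      calc c^2 * t = c * (c * t) := by ring
        _ = c * ∑ j : Fin (q-a),
            (if (j:ℕ) < q - a - (k-a)*p then (1:ℝ) else 0) * w (Sum.inr j) := by rw [h]
        _ = ∑ j : Fin (q-a), (if (j:ℕ) < q - a - (k-a)*p then c * w (Sum.inr j) else 0) := by
            rw [Finset.mul_sum]
            refine Finset.sum_congr rfl fun j _ => ?_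
            by_cases hj : (j:ℕ) < q - a - (k-a)*p
            · rw [if_pos hj, if_pos hj, one_mul]
            · rw [if_neg hj, if_neg hj, zero_mul, mul_zero]
        _ = ∑ j : Fin (q-a), (if (j:ℕ) < q - a - (k-a)*p then S1 + t else 0) := by
            refine Finset.sum_congr rfl fun j _ => ?_
            by_cases hj : (j:ℕ) < q - a - (k-a)*p
            · rw [if_pos hj, if_pos hj, hcol j, if_pos hj]
            · rw [if_neg hj, if_neg hj]
        _ = n * (S1 + t) := by rw [sum_ite_lt (q-a) _ hnnle, hn]
    have hAS : c^2 * S1 = (P-1) * (m * S1 + n * t) := by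
      calc c^2 * S1 = ∑ i : Fin p, (if (i:ℕ) < p-1 then c^2 * w (Sum.inl i) else 0) := by
            rw [hS1def, Finset.mul_sum]
            refine Finset.sum_congr rfl fun i _ => ?_
            by_cases hi : (i:ℕ) < p-1
            · rw [if_pos hi, if_pos hi]
            · rw [if_neg hi, if_neg hi, mul_zero]
        _ = ∑ i : Fin p, (if (i:ℕ) < p-1 then m * S1 + n * t else 0) := by
            refine Finset.sum_congr rfl fun i _ => ?_
            by_cases hi : (i:ℕ) < p-1
            · rw [if_pos hi, if_pos hi, hxi i hi]
            · rw [if_neg hi, if_neg hi]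
        _ = (P-1) * (m * S1 + n * t) := by
            rw [sum_ite_lt p (p-1) (by omega), hsp]
    rcases eq_or_ne c 0 with rfl | hc0
    · exact hl0.le
    by_cases ht : t = 0
    · exfalso
      apply hvne
      have hn0 : n ≠ 0 := by linarith
      have hS10 : S1 = 0 := by
        rw [ht] at hBt
        have h : n * S1 = 0 := by linear_combination -hBt
        rcases mul_eq_zero.mp h with h' | h'
        · exact absurd h' hn0
        · exact h'
      funext z
      cases z with
      | inl i =>
        by_cases hi : (i:ℕ) < p-1
        · have h := hxi i hi
          rw [hS10, ht] at h
          simp only [mul_zero, add_zero, Pi.zero_apply] at h ⊢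
          rcases mul_eq_zero.mp h with h' | h'
          · exact absurd (pow_eq_zero_iff (n := 2) (by norm_num) |>.mp h') hc0
          · exact h'
        · have hie : i = (⟨p-1, hple⟩ : Fin p) := by
            have h9 := i.isLt; ext; simp; omega
          rw [hie]
          exact ht
      | inr j =>
        have h := hcol j
        rw [hS10, ht] at h
        simp only [Pi.zero_apply]
        have h' : c * w (Sum.inr j) = 0 := by
          rw [h]
          by_cases hj : (j:ℕ) < q - a - (k-a)*p
          · rw [if_pos hj]; ring
          · rw [if_neg hj]; ring
        rcases mul_eq_zero.mp h' with h'' | h''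
        · exact absurd h'' hc0
        · exact h''
    · have hS1n : n * S1 = c^2 * t - n * t := by linear_combination -hBt
      have hq2 : (c^2)^2 - ((P-1)*m + n)*(c^2) + (P-1)*n*(m-n) = 0 := by
        have h4 : t * ((c^2)^2 - ((P-1)*m + n)*(c^2) + (P-1)*n*(m-n)) = 0 := by
          linear_combination n*hAS - (c^2 - (P-1)*m)*hS1n
        rcases mul_eq_zero.mp h4 with h | h
        · exact absurd h ht
        · exact h
      have hdisc : (2*c^2 - ((P-1)*m + n))^2 = D := by
        linear_combination 4*hq2 - hD
      have h5 : 2*c^2 - ((P-1)*m + n) ≤ Real.sqrt D := by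
        calc 2*c^2 - ((P-1)*m + n) ≤ |2*c^2 - ((P-1)*m + n)| := le_abs_self _
          _ = Real.sqrt ((2*c^2 - ((P-1)*m + n))^2) := (Real.sqrt_sq_eq_abs _).symm
          _ = Real.sqrt D := by rw [hdisc]
      have hcm : c^2 <= μ := by rw [hμ]; linarith
      calc c ≤ |c| := le_abs_self c
        _ = Real.sqrt (c^2) := (Real.sqrt_sq_eq_abs c).symm
        _ ≤ Real.sqrt μ := Real.sqrt_le_sqrt hcm
        _ = l := hl.symm
  -- conclude
  have hgr : IsGreatest (spectrum ℝ (adjD p (q - a) (dKa p q k a))) l := ⟨hmem, hub⟩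
  have hsup : specRad (adjD p (q - a) (dKa p q k a)) = l := hgr.csSup_eq
  rw [hsup, hl2]
  have hμquad2 : μ^2 = P*(Q-K)*μ - (K-Aa)*P*(P-1)*(Q-Aa-(K-Aa)*P) := by
    have h := hμquad
    rw [hm_def, hn_def] at h
    linear_combination h
  have hD2 : D = (P*(Q-K))^2 - 4*((K-Aa)*P*(P-1)*(Q-Aa-(K-Aa)*P)) := by
    have h := hD
    rw [hm_def, hn_def] at h
    linear_combination h
  have hmu2 : μ = (P*(Q-K) + Real.sqrt D)/2 := by
    have h := hμ
    rw [hm_def, hn_def] at h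
    linear_combination h
  constructor
  · show μ^3 - (e:ℝ)*μ^2 + ((k:ℝ)-(a:ℝ))*(p:ℝ)*((p:ℝ)-1)*((q:ℝ)-(a:ℝ)-((k:ℝ)-(a:ℝ))*(p:ℝ))*μ = 0
    rw [he2, ← hK, ← hAa, ← hP, ← hQ]
    linear_combination μ * hμquad2
  · intro x hx
    simp only [Set.mem_setOf_eq] at hx
    rw [he2, ← hK, ← hAa, ← hP, ← hQ] at hx
    have hfac : x * (x^2 - P*(Q-K)*x + (K-Aa)*P*(P-1)*(Q-Aa-(K-Aa)*P)) = 0 := by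
      linear_combination hx
    rcases mul_eq_zero.mp hfac with rfl | h
    · exact hμpos.le
    · have hdisc : (2*x - P*(Q-K))^2 = D := by
        linear_combination 4*h - hD2
      have h5 : 2*x - P*(Q-K) ≤ Real.sqrt D := by
        calc 2*x - P*(Q-K) ≤ |2*x - P*(Q-K)| := le_abs_self _
          _ = Real.sqrt ((2*x - P*(Q-K))^2) := (Real.sqrt_sq_eq_abs _).symm
          _ = Real.sqrt D := by rw [hdisc]
      rw [hmu2]; linarith
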